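/- arXiv:2604.23482 — 4 statements merged into one kernel-verified Lean document; each statement's English description precedes it below -/
import Mathlib

section
/- Let A ∈ M_r(𝔽₂) be a symmetric matrix over 𝔽₂ such that the sum of the entries in each row of A is zero (equivalently A·𝟏_r = 𝟎_r, where 𝟏_r is the all-ones vector), and assume rank_{𝔽₂}(A) = r − 1. Then rank_{𝔽₂}(A²) = r − 1 if r is odd, and rank_{𝔽₂}(A²) = r − 2 if r is even. -/
/-!
Since `A` is symmetric and `A 𝟏 = 0`, its range lies in the hyperplane `𝟏ᗮ`, hence equals it by
the rank hypothesis, and `ker A = ⟨𝟏⟩`. Rank–nullity for `A` restricted to its range gives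
`rank A² = rank A - dim (range A ⊓ ker A)`, and `𝟏 ∈ range A` iff `𝟏 ⬝ᵥ 𝟏 = r` vanishes in `𝔽₂`,
i.e. iff `r` is even.
-/

open Module LinearMap Submodule Matrix

section RankOfComposition

variable {K V W U : Type*} [Field K] [AddCommGroup V] [Module K V] [AddCommGroup W]
  [Module K W] [AddCommGroup U] [Module K U] [FiniteDimensional K V]

theorem LinearMap.finrank_range_comp_add_finrank_inf_ker (f : W →ₗ[K] U) (g : V →ₗ[K] W) :
    finrank K (range (f ∘ₗ g)) + finrank K ↥(range g ⊓ ker f) = finrank K (range g) := by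
  have := finrank_range_add_finrank_ker (f.domRestrict (range g))
  rwa [range_domRestrict, ker_domRestrict, ← finrank_map_subtype_eq, map_comap_subtype,
    ← range_comp] at this

end RankOfComposition

namespace Matrix

variable {K n : Type*} [Field K] [Fintype n] {A : Matrix n n K} {v : n → K}

theorem rank_mul_self_of_ker_eq_span_of_notMem_range (hker : ker A.mulVecLin = K ∙ v)
    (hv : v ∉ range A.mulVecLin) : (A * A).rank = A.rank := by
  have hinf : range A.mulVecLin ⊓ ker A.mulVecLin = ⊥ := by
    rw [hker, ← disjoint_iff]
    exact disjoint_span_singleton_of_notMem hv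
  have := finrank_range_comp_add_finrank_inf_ker A.mulVecLin A.mulVecLin
  rwa [hinf, finrank_bot, add_zero, ← mulVecLin_mul] at this

theorem rank_mul_self_add_one_of_ker_eq_span_of_mem_range (hker : ker A.mulVecLin = K ∙ v)
    (hv0 : v ≠ 0) (hv : v ∈ range A.mulVecLin) : (A * A).rank + 1 = A.rank := by
  have hinf : range A.mulVecLin ⊓ ker A.mulVecLin = K ∙ v := by
    rw [hker, inf_eq_right, span_singleton_le_iff_mem]
    exact hv
  have := finrank_range_comp_add_finrank_inf_ker A.mulVecLin A.mulVecLin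
  rwa [hinf, finrank_span_singleton hv0, ← mulVecLin_mul] at this

theorem ker_mulVecLin_eq_span_of_rank_eq (hrank : A.rank = Fintype.card n - 1) (hv0 : v ≠ 0)
    (hAv : A *ᵥ v = 0) : ker A.mulVecLin = K ∙ v := by
  symm
  refine eq_of_le_of_finrank_le ((span_singleton_le_iff_mem _ _).mpr hAv) ?_
  have := finrank_range_add_finrank_ker A.mulVecLin
  rw [finrank_span_singleton hv0]
  simp only [Matrix.rank, Module.finrank_fintype_fun_eq_card] at hrank this
  omega

theorem dotProduct_mulVec_eq_zero_of_isSymm (hA : A.IsSymm) (hAv : A *ᵥ v = 0) (w : n → K) :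
    v ⬝ᵥ (A *ᵥ w) = 0 := by
  rw [dotProduct_mulVec, ← hA.eq, vecMul_transpose, hAv, zero_dotProduct]

theorem mem_range_mulVecLin_iff_dotProduct_eq_zero [DecidableEq n] (hA : A.IsSymm)
    (hrank : A.rank = Fintype.card n - 1) (hv0 : v ≠ 0) (hAv : A *ᵥ v = 0) (w : n → K) :
    w ∈ range A.mulVecLin ↔ v ⬝ᵥ w = 0 := by
  have hle : range A.mulVecLin ≤ ker (dotProductEquiv K n v) := by
    rintro _ ⟨u, rfl⟩
    exact dotProduct_mulVec_eq_zero_of_isSymm hA hAv u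
  have hfinrank_ker := Module.Dual.finrank_ker_add_one_of_ne_zero
    ((dotProductEquiv K n).map_ne_zero_iff.mpr hv0)
  rw [finrank_fintype_fun_eq_card] at hfinrank_ker
  rw [eq_of_le_of_finrank_le hle (by change _ ≤ A.rank; omega), mem_ker,
    dotProductEquiv_apply_apply]

end Matrix

/-- If `A` is a symmetric `r × r` matrix over `𝔽₂` whose row sums are all zero
(equivalently `A · 𝟏 = 0`) and `rank A = r - 1`, then `rank (A²) = r - 1` if `r` is odd
and `rank (A²) = r - 2` if `r` is even. -/
theorem stmt4 (r : ℕ) (A : Matrix (Fin r) (Fin r) (ZMod 2))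
    (hsymm : A.IsSymm) (hrow : A.mulVec (fun _ => 1) = 0)
    (hrank : A.rank = r - 1) :
    (Odd r → (A * A).rank = r - 1) ∧ (Even r → (A * A).rank = r - 2) := by
  obtain rfl | hr := Nat.eq_zero_or_pos r
  · have : (A * A).rank = 0 := Nat.le_zero.mp ((A * A).rank_le_card_height.trans_eq (by simp))
    exact ⟨fun _ => this, fun _ => this⟩
  have hone : (fun _ => 1 : Fin r → ZMod 2) ≠ 0 := fun h => one_ne_zero (congrFun h ⟨0, hr⟩)
  have hrank' : A.rank = Fintype.card (Fin r) - 1 := by rwa [Fintype.card_fin]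
  have hker := ker_mulVecLin_eq_span_of_rank_eq hrank' hone hrow
  have hmem : (fun _ => 1) ∈ range A.mulVecLin ↔ Even r := by
    rw [mem_range_mulVecLin_iff_dotProduct_eq_zero hsymm hrank' hone hrow,
      ← ZMod.natCast_eq_zero_iff_even]
    simp [dotProduct]
  refine ⟨fun hodd => ?_, fun heven => ?_⟩
  · have hnotMem : (fun _ => 1) ∉ range A.mulVecLin := by rwa [hmem, Nat.not_even_iff_odd]
    rw [rank_mul_self_of_ker_eq_span_of_notMem_range hker hnotMem, hrank]
  · have := rank_mul_self_add_one_of_ker_eq_span_of_mem_range hker hone (hmem.mpr heven)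
    omega
end

section
/- Let t be an odd positive integer and let p_1, …, p_t, q be distinct primes with p_i ≡ 5 (mod 8) for all i and q ≡ 7 (mod 8); assume rank_{𝔽₂}(A_P) = t − 1 where P = p_1⋯p_t, and Legendre symbol (p_i/q) = 1 for all i. Order the prime factors of n = Pq as ℓ_1 = p_1, …, ℓ_t = p_t, ℓ_{t+1} = q, and let M be the Monsky matrix of n. Then rank_{𝔽₂}(M) = 2t (so the 2-Selmer rank s_n = 2(t+1) − rank_{𝔽₂}(M) equals 2), and the null space of M in 𝔽₂^{2t+2} is spanned by Ψ(q, 1) and Ψ(P, P). -/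
open Finset

/-- The matrix `A` over `𝔽₂` attached to distinct odd primes `ℓ 0, …, ℓ (r-1)`:
off-diagonal entry `a_{ij}` is `1` iff the Legendre symbol `(ℓ j / ℓ i) = -1`,
and `a_{ii} = ∑_{j ≠ i} a_{ij}`. -/
noncomputable def APmat {r : ℕ} (ℓ : Fin r → ℕ) : Matrix (Fin r) (Fin r) (ZMod 2) :=
  fun i j =>
    if i = j then ∑ k ∈ univ.erase i, (if jacobiSym (ℓ k) (ℓ i) = -1 then (1 : ZMod 2) else 0)
    else if jacobiSym (ℓ j) (ℓ i) = -1 then 1 else 0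

/-- The diagonal matrix `D_l` with `(D_l)_{ii} = φ((l / ℓ i))`. -/
noncomputable def monskyD {r : ℕ} (l : ℤ) (ℓ : Fin r → ℕ) : Matrix (Fin r) (Fin r) (ZMod 2) :=
  Matrix.diagonal fun i => if jacobiSym l (ℓ i) = -1 then 1 else 0

/-- The Monsky matrix `[[A + D₂, D₂], [D₂, A + D₋₂]]` of the squarefree odd number
`ℓ 0 ⋯ ℓ (r-1)`. -/
noncomputable def monsky {r : ℕ} (ℓ : Fin r → ℕ) :
    Matrix (Fin r ⊕ Fin r) (Fin r ⊕ Fin r) (ZMod 2) :=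
  Matrix.fromBlocks (APmat ℓ + monskyD 2 ℓ) (monskyD 2 ℓ)
    (monskyD 2 ℓ) (APmat ℓ + monskyD (-2) ℓ)

/-- The exponent vector of a positive divisor `u` of `ℓ 0 ⋯ ℓ (r-1)`. -/
def expVec {r : ℕ} (ℓ : Fin r → ℕ) (u : ℕ) : Fin r → ZMod 2 :=
  fun i => if ℓ i ∣ u then 1 else 0

/-- `Ψ(u, u') = (ε(u), ε(u')) ∈ 𝔽₂^{2r}`. -/
def psiVec {r : ℕ} (ℓ : Fin r → ℕ) (u u' : ℕ) : (Fin r ⊕ Fin r) → ZMod 2 :=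
  Sum.elim (expVec ℓ u) (expVec ℓ u')


/-! Since `(p_i / q) = (q / p_i) = 1`, the prime `q` is invisible to `A`: the matrix `A` of `n` is
`A_P` bordered by zeros, while `D₂ = diag(1, …, 1, 0)` and `D₋₂ = 1`. Writing a vector of
`𝔽₂^{2t+2}` as `(x, a, y, b)` with `x, y ∈ 𝔽₂^t`, the equation `M v = 0` becomes
`A_P x = x + y = A_P y` and `b = 0`. Hence `x + y ∈ ker A_P = 𝔽₂ 𝟙`. The case `x + y = 𝟙` is
impossible: `A_P` is symmetric with zero row sums, so the coordinates of `A_P x` sum to `0`,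
while those of `𝟙` sum to `t = 1`. So `x = y ∈ 𝔽₂ 𝟙` and `a` is free, i.e. the kernel is
spanned by `Ψ(q, 1) = (0, 1, 0, 0)` and `Ψ(P, P) = (𝟙, 0, 𝟙, 0)`. -/

open Matrix

theorem CharTwo.pi_add_eq_zero_iff {ι R : Type*} [Ring R] [CharP R 2] {a b : ι → R} :
    a + b = 0 ↔ a = b := by
  simp only [funext_iff, Pi.add_apply, Pi.zero_apply, CharTwo.add_eq_zero]

theorem Sum.smul_elim {α β M γ : Type*} [SMul M γ] (c : M) (f : α → γ) (g : β → γ) :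
    c • Sum.elim f g = Sum.elim (c • f) (c • g) := by
  ext (i | i) <;> rfl

section FinSnoc

variable {n : ℕ} {α : Type*}

theorem Fin.snoc_add_snoc [Add α] (x y : Fin n → α) (a b : α) :
    (Fin.snoc x a : Fin (n + 1) → α) + Fin.snoc y b = Fin.snoc (x + y) (a + b) := by
  ext i
  induction i using Fin.lastCases <;> simp

theorem Fin.smul_snoc {M : Type*} [SMul M α] (c : M) (x : Fin n → α) (a : α) :
    c • (Fin.snoc x a : Fin (n + 1) → α) = Fin.snoc (c • x) (c • a) := by
  ext i
  induction i using Fin.lastCases <;> simp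

theorem Fin.snoc_zero_zero [Zero α] : (Fin.snoc (0 : Fin n → α) 0 : Fin (n + 1) → α) = 0 := by
  ext i
  induction i using Fin.lastCases <;> simp

theorem exists_eq_sum_elim_snoc (v : Fin (n + 1) ⊕ Fin (n + 1) → α) :
    ∃ x a y b, v = Sum.elim (Fin.snoc x a) (Fin.snoc y b) :=
  ⟨Fin.init (v ∘ Sum.inl), v (Sum.inl (Fin.last n)), Fin.init (v ∘ Sum.inr),
    v (Sum.inr (Fin.last n)), by
      rw [← Function.comp_apply (f := v), ← Function.comp_apply (f := v) (g := Sum.inr),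
        Fin.snoc_init_self, Fin.snoc_init_self, Sum.elim_comp_inl_inr]⟩

end FinSnoc

theorem Matrix.rank_add_finrank_ker {m n K : Type*} [Fintype n] [Field K] (A : Matrix m n K) :
    A.rank + Module.finrank K (LinearMap.ker A.mulVecLin) = Fintype.card n := by
  rw [Matrix.rank, LinearMap.finrank_range_add_finrank_ker, Module.finrank_fintype_fun_eq_card]

theorem Matrix.ker_mulVecLin_eq_span_singleton {m n K : Type*} [Fintype n] [Field K]
    {A : Matrix m n K} (hrank : A.rank = Fintype.card n - 1) {v : n → K} (hv : A *ᵥ v = 0)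
    (hv0 : v ≠ 0) : LinearMap.ker A.mulVecLin = K ∙ v := by
  have hle : K ∙ v ≤ LinearMap.ker A.mulVecLin :=
    (Submodule.span_singleton_le_iff_mem _ _).mpr hv
  have hcard : 0 < Fintype.card n := Fintype.card_pos_iff.mpr (Function.ne_iff.mp hv0).nonempty
  refine (Submodule.eq_of_le_of_finrank_eq hle ?_).symm
  have := A.rank_add_finrank_ker
  rw [finrank_span_singleton hv0]
  omega

theorem mulVec_add_add_eq_zero_iff {n : Type*} [Fintype n] {B : Matrix n n (ZMod 2)}
    (hodd : Odd (Fintype.card n)) (hcol : 1 ᵥ* B = 0)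
    (hker : LinearMap.ker B.mulVecLin = ZMod 2 ∙ 1) (x y : n → ZMod 2) :
    B *ᵥ x + x + y = 0 ∧ x + B *ᵥ y + y = 0 ↔ x = y ∧ B *ᵥ x = 0 := by
  constructor
  · rintro ⟨hx, hy⟩
    rw [add_assoc, CharTwo.pi_add_eq_zero_iff] at hx
    rw [add_comm x, add_assoc, CharTwo.pi_add_eq_zero_iff] at hy
    have hxy : x + y ∈ LinearMap.ker B.mulVecLin := by
      rw [LinearMap.mem_ker, mulVecLin_apply, mulVec_add, hx, hy, CharTwo.pi_add_eq_zero_iff]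
    rw [hker, Submodule.mem_span_singleton] at hxy
    obtain ⟨c, hc⟩ := hxy
    obtain rfl | rfl := (by decide : ∀ c : ZMod 2, c = 0 ∨ c = 1) c
    · rw [zero_smul, eq_comm, CharTwo.pi_add_eq_zero_iff] at hc
      exact ⟨hc, by rw [hx, hc, CharTwo.pi_add_eq_zero_iff]⟩
    · rw [one_smul, ← hx] at hc
      have h := congrArg (1 ⬝ᵥ ·) hc
      simp only [dotProduct_mulVec, hcol, zero_dotProduct, one_dotProduct_one,
        (ZMod.natCast_eq_one_iff_odd).mpr hodd] at h
      exact (one_ne_zero h).elim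
  · rintro ⟨rfl, hx⟩
    simp [hx, CharTwo.pi_add_eq_zero_iff]

theorem Nat.Coprime.of_jacobiSym_eq_one {a b : ℕ} (hb : b ≠ 0) (h : jacobiSym a b = 1) :
    a.Coprime b := by
  have := jacobiSym.eq_zero_iff.not.mp (by rw [h]; decide)
  rw [Nat.coprime_iff_gcd_eq_one, ← Int.gcd_natCast_natCast]
  exact not_not.mp fun hab => this ⟨hb, hab⟩

theorem jacobiSym_two_of_mod_eight_eq_five {n : ℕ} (h : n % 8 = 5) : jacobiSym 2 n = -1 := by
  rw [jacobiSym.at_two (Nat.odd_iff.mpr (by omega)), ZMod.χ₈_nat_eq_if_mod_eight,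
    if_neg (by omega), if_neg (by omega)]

theorem jacobiSym_neg_two_of_mod_eight_eq_five {n : ℕ} (h : n % 8 = 5) :
    jacobiSym (-2) n = -1 := by
  rw [jacobiSym.at_neg_two (Nat.odd_iff.mpr (by omega)), ZMod.χ₈'_nat_eq_if_mod_eight,
    if_neg (by omega), if_neg (by omega)]

theorem jacobiSym_two_of_mod_eight_eq_seven {n : ℕ} (h : n % 8 = 7) : jacobiSym 2 n = 1 := by
  rw [jacobiSym.at_two (Nat.odd_iff.mpr (by omega)), ZMod.χ₈_nat_eq_if_mod_eight,
    if_neg (by omega), if_pos (by omega)]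

theorem jacobiSym_neg_two_of_mod_eight_eq_seven {n : ℕ} (h : n % 8 = 7) :
    jacobiSym (-2) n = -1 := by
  rw [jacobiSym.at_neg_two (Nat.odd_iff.mpr (by omega)), ZMod.χ₈'_nat_eq_if_mod_eight,
    if_neg (by omega), if_neg (by omega)]

section APmat

variable {r : ℕ} {ℓ : Fin r → ℕ}

theorem APmat_mulVec_one (ℓ : Fin r → ℕ) : APmat ℓ *ᵥ 1 = 0 := by
  ext i
  have hrow : ∑ j ∈ univ.erase i, APmat ℓ i j = APmat ℓ i i := by
    simp only [APmat]
    exact Finset.sum_congr rfl fun j hj => if_neg (Finset.ne_of_mem_erase hj).symm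
  simp only [mulVec, dotProduct, Pi.one_apply, mul_one, Pi.zero_apply]
  rw [← Finset.add_sum_erase _ _ (mem_univ i), hrow, CharTwo.add_self_eq_zero]

theorem APmat_transpose (h : ∀ i j, jacobiSym (ℓ i) (ℓ j) = jacobiSym (ℓ j) (ℓ i)) :
    (APmat ℓ)ᵀ = APmat ℓ := by
  ext i j
  rcases eq_or_ne i j with rfl | hij
  · rfl
  · simp only [transpose_apply, APmat, if_neg hij, if_neg hij.symm, h i j]

theorem one_vecMul_APmat (h : ∀ i j, jacobiSym (ℓ i) (ℓ j) = jacobiSym (ℓ j) (ℓ i)) :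
    1 ᵥ* APmat ℓ = 0 := by
  rw [← mulVec_transpose, APmat_transpose h, APmat_mulVec_one]

theorem ker_APmat_eq_span_one (hr : r ≠ 0) (hrank : (APmat ℓ).rank = r - 1) :
    LinearMap.ker (APmat ℓ).mulVecLin = ZMod 2 ∙ 1 :=
  ker_mulVecLin_eq_span_singleton (by rwa [Fintype.card_fin]) (APmat_mulVec_one ℓ)
    (Function.ne_iff.mpr ⟨⟨0, Nat.pos_of_ne_zero hr⟩, one_ne_zero⟩)

theorem monskyD_eq_one {l : ℤ} (h : ∀ i, jacobiSym l (ℓ i) = -1) : monskyD l ℓ = 1 := by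
  simp [monskyD, h]

end APmat

section MonskySnoc

variable {t : ℕ} {p : Fin t → ℕ} {q : ℕ}

theorem APmat_snoc_castSucc_castSucc (hqp : ∀ i, jacobiSym q (p i) ≠ -1) (i j : Fin t) :
    APmat (Fin.snoc p q) i.castSucc j.castSucc = APmat p i j := by
  rcases eq_or_ne i j with rfl | hij
  · simp only [APmat, Fin.snoc_castSucc]
    rw [sum_erase_eq_sub (mem_univ _), sum_erase_eq_sub (mem_univ _), Fin.sum_univ_castSucc]
    simp [hqp i]
  · simp only [APmat, Fin.castSucc_inj, if_neg hij, Fin.snoc_castSucc]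

theorem APmat_snoc_castSucc_last (hqp : ∀ i, jacobiSym q (p i) ≠ -1) (i : Fin t) :
    APmat (Fin.snoc p q) i.castSucc (Fin.last t) = 0 := by
  simp [APmat, (Fin.castSucc_lt_last i).ne, hqp i]

theorem APmat_snoc_last (hpq : ∀ i, jacobiSym (p i) q ≠ -1) (j : Fin (t + 1)) :
    APmat (Fin.snoc p q) (Fin.last t) j = 0 := by
  induction j using Fin.lastCases with
  | last =>
    simp only [APmat]
    refine sum_eq_zero fun k hk => ?_
    obtain ⟨k, rfl⟩ := Fin.exists_castSucc_eq.mpr (ne_of_mem_erase hk)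
    simp [hpq k]
  | cast j => simp [APmat, (Fin.castSucc_lt_last j).ne', hpq j]

theorem APmat_snoc_mulVec (hqp : ∀ i, jacobiSym q (p i) ≠ -1)
    (hpq : ∀ i, jacobiSym (p i) q ≠ -1) (x : Fin t → ZMod 2) (a : ZMod 2) :
    APmat (Fin.snoc p q) *ᵥ Fin.snoc x a = Fin.snoc (APmat p *ᵥ x) 0 := by
  ext i
  induction i using Fin.lastCases with
  | last => simp [mulVec, dotProduct, APmat_snoc_last hpq]
  | cast i =>
    simp [mulVec, dotProduct, Fin.sum_univ_castSucc, APmat_snoc_castSucc_castSucc hqp,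
      APmat_snoc_castSucc_last hqp]

theorem monskyD_snoc_mulVec (l : ℤ) (x : Fin t → ZMod 2) (a : ZMod 2) :
    monskyD l (Fin.snoc p q) *ᵥ Fin.snoc x a =
      Fin.snoc (monskyD l p *ᵥ x) ((if jacobiSym l q = -1 then 1 else 0) * a) := by
  ext i
  induction i using Fin.lastCases <;> simp [monskyD, mulVec_diagonal]

theorem monsky_snoc_mulVec (hp5 : ∀ i, p i % 8 = 5) (hq7 : q % 8 = 7)
    (hqp : ∀ i, jacobiSym q (p i) ≠ -1) (hpq : ∀ i, jacobiSym (p i) q ≠ -1)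
    (x y : Fin t → ZMod 2) (a b : ZMod 2) :
    monsky (Fin.snoc p q) *ᵥ Sum.elim (Fin.snoc x a) (Fin.snoc y b) =
      Sum.elim (Fin.snoc (APmat p *ᵥ x + x + y) 0) (Fin.snoc (x + APmat p *ᵥ y + y) b) := by
  simp only [monsky, fromBlocks_mulVec, Sum.elim_comp_inl, Sum.elim_comp_inr, add_mulVec,
    APmat_snoc_mulVec hqp hpq, monskyD_snoc_mulVec]
  rw [monskyD_eq_one fun i => jacobiSym_two_of_mod_eight_eq_five (hp5 i),
    monskyD_eq_one fun i => jacobiSym_neg_two_of_mod_eight_eq_five (hp5 i),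
    jacobiSym_two_of_mod_eight_eq_seven hq7, jacobiSym_neg_two_of_mod_eight_eq_seven hq7]
  simp [Fin.snoc_add_snoc, add_assoc]

theorem expVec_snoc (u : ℕ) :
    expVec (Fin.snoc p q) u = Fin.snoc (expVec p u) (if q ∣ u then 1 else 0) := by
  ext i
  induction i using Fin.lastCases <;> simp [expVec]

theorem expVec_eq_zero {u : ℕ} (h : ∀ i, ¬ p i ∣ u) : expVec p u = 0 := by
  ext i
  simp [expVec, h i]

theorem expVec_eq_one {u : ℕ} (h : ∀ i, p i ∣ u) : expVec p u = 1 := by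
  ext i
  simp [expVec, h i]

theorem psiVec_snoc_self_one (hq : q ≠ 1) (hpq : ∀ i, ¬ p i ∣ q) :
    psiVec (Fin.snoc p q) q 1 = Sum.elim (Fin.snoc 0 1) (Fin.snoc 0 0) := by
  have hp1 : ∀ i, ¬ p i ∣ 1 := fun i h => hpq i (h.trans (one_dvd q))
  simp [psiVec, expVec_snoc, expVec_eq_zero hpq, expVec_eq_zero hp1, hq]

theorem psiVec_snoc_prod_prod (hq : ¬ q ∣ ∏ i, p i) :
    psiVec (Fin.snoc p q) (∏ i, p i) (∏ i, p i) = Sum.elim (Fin.snoc 1 0) (Fin.snoc 1 0) := by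
  simp [psiVec, expVec_snoc, expVec_eq_one fun i => dvd_prod_of_mem p (mem_univ i), hq]

end MonskySnoc

section KernelBasis

variable {K : Type*} [Field K] {n : ℕ}

theorem mem_span_elim_snoc_pair (x y : Fin n → K) (a b : K) :
    Sum.elim (Fin.snoc x a) (Fin.snoc y b) ∈ Submodule.span K
        {Sum.elim (Fin.snoc 0 1) (Fin.snoc 0 0), Sum.elim (Fin.snoc 1 0) (Fin.snoc 1 0)} ↔
      x = y ∧ x ∈ K ∙ 1 ∧ b = 0 := by
  simp only [Submodule.mem_span_pair, Submodule.mem_span_singleton, Sum.smul_elim, Fin.smul_snoc,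
    smul_zero, ← Sum.elim_add_add, Fin.snoc_add_snoc, zero_add, Sum.elim_eq_iff,
    Fin.snoc_inj, smul_eq_mul, mul_one, mul_zero, add_zero]
  constructor
  · rintro ⟨c, d, ⟨rfl, -⟩, rfl, rfl⟩
    exact ⟨rfl, ⟨d, rfl⟩, rfl⟩
  · rintro ⟨rfl, ⟨d, rfl⟩, rfl⟩
    exact ⟨a, d, ⟨rfl, rfl⟩, rfl, rfl⟩

theorem finrank_span_elim_snoc_pair (hn : n ≠ 0) :
    Module.finrank K (Submodule.span K ({Sum.elim (Fin.snoc 0 1) (Fin.snoc 0 0),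
      Sum.elim (Fin.snoc 1 0) (Fin.snoc 1 0)} : Set (Fin (n + 1) ⊕ Fin (n + 1) → K))) = 2 := by
  have : NeZero n := ⟨hn⟩
  have hli : LinearIndependent K ![(Sum.elim (Fin.snoc 0 1) (Fin.snoc 0 0) :
      Fin (n + 1) ⊕ Fin (n + 1) → K), Sum.elim (Fin.snoc 1 0) (Fin.snoc 1 0)] := by
    rw [LinearIndependent.pair_iff]
    intro s u h
    simp only [Sum.smul_elim, Fin.smul_snoc, ← Sum.elim_add_add, Fin.snoc_add_snoc,
      ← Sum.elim_zero_zero, Sum.elim_eq_iff, ← Fin.snoc_zero_zero, Fin.snoc_inj] at h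
    simp only [smul_zero, zero_add, add_zero, smul_eq_zero, one_ne_zero, or_false, smul_eq_mul,
      mul_one, mul_zero] at h
    exact ⟨h.1.2, h.1.1⟩
  have := finrank_span_eq_card hli
  rwa [Matrix.range_cons_cons_empty, Fintype.card_fin] at this

end KernelBasis

theorem ker_monsky_snoc {t : ℕ} (ht : Odd t) {p : Fin t → ℕ} {q : ℕ} (hp5 : ∀ i, p i % 8 = 5)
    (hq7 : q % 8 = 7) (hrank : (APmat p).rank = t - 1) (hleg : ∀ i, jacobiSym (p i) q = 1) :
    LinearMap.ker (monsky (Fin.snoc p q)).mulVecLin = Submodule.span (ZMod 2)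
      {Sum.elim (Fin.snoc 0 1) (Fin.snoc 0 0), Sum.elim (Fin.snoc 1 0) (Fin.snoc 1 0)} := by
  have hp4 (i : Fin t) : p i % 4 = 1 := by have := hp5 i; omega
  have hodd (i : Fin t) : Odd (p i) := Nat.odd_iff.mpr (by have := hp5 i; omega)
  have hqp (i : Fin t) : jacobiSym q (p i) = 1 :=
    (jacobiSym.quadratic_reciprocity_one_mod_four (hp4 i) (Nat.odd_iff.mpr (by omega))).symm.trans
      (hleg i)
  have hkerA := ker_APmat_eq_span_one ht.pos.ne' hrank
  have hcol := one_vecMul_APmat fun i j =>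
    jacobiSym.quadratic_reciprocity_one_mod_four (hp4 i) (hodd j)
  ext v
  obtain ⟨x, a, y, b, rfl⟩ := exists_eq_sum_elim_snoc v
  rw [LinearMap.mem_ker, mulVecLin_apply,
    monsky_snoc_mulVec hp5 hq7 (fun i => by simp [hqp i]) (fun i => by simp [hleg i]),
    ← Sum.elim_zero_zero, ← Fin.snoc_zero_zero, Sum.elim_eq_iff, Fin.snoc_inj, Fin.snoc_inj,
    mem_span_elim_snoc_pair, ← hkerA, LinearMap.mem_ker, mulVecLin_apply]
  simp only [and_true, ← and_assoc,
    mulVec_add_add_eq_zero_iff (by rwa [Fintype.card_fin]) hcol hkerA]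

theorem stmt6_general (t : ℕ) (ht : Odd t)
    (p : Fin t → ℕ) (q : ℕ)
    (hp5 : ∀ i, p i % 8 = 5) (hq7 : q % 8 = 7)
    (hrank : (APmat p).rank = t - 1)
    (hleg : ∀ i, jacobiSym (p i) q = 1) :
    (monsky (Fin.snoc p q)).rank = 2 * t ∧
    LinearMap.ker (monsky (Fin.snoc p q)).mulVecLin =
      Submodule.span (ZMod 2)
        {psiVec (Fin.snoc p q) q 1,
         psiVec (Fin.snoc p q) (∏ i, p i) (∏ i, p i)} := by
  have hq1 : q ≠ 1 := by omega
  have hcop (i : Fin t) : (p i).Coprime q := .of_jacobiSym_eq_one (by omega) (hleg i)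
  have hp_ndvd (i : Fin t) : ¬ p i ∣ q := fun h => by
    have := hp5 i
    have := (hcop i).eq_one_of_dvd h
    omega
  have hqP : ¬ q ∣ ∏ i, p i := fun h =>
    hq1 ((Nat.Coprime.prod_right fun i _ => (hcop i).symm).eq_one_of_dvd h)
  rw [psiVec_snoc_self_one hq1 hp_ndvd, psiVec_snoc_prod_prod hqP]
  have hker := ker_monsky_snoc ht hp5 hq7 hrank hleg
  refine ⟨?_, hker⟩
  have := (monsky (Fin.snoc p q)).rank_add_finrank_ker
  rw [hker, finrank_span_elim_snoc_pair ht.pos.ne', Fintype.card_sum, Fintype.card_fin] at this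
  omega

/-- For `n = p_1 ⋯ p_t q` with `t` odd, `p_i ≡ 5 (mod 8)`, `q ≡ 7 (mod 8)`,
`rank A_P = t - 1` and `(p_i / q) = 1`, the Monsky matrix `M` of `n` (with the prime
factors ordered as `p_1, …, p_t, q`) has rank `2 t` (so the 2-Selmer rank is `2`),
and its null space is spanned by `Ψ(q, 1)` and `Ψ(P, P)`. -/
theorem stmt6 (t : ℕ) (ht : Odd t)
    (p : Fin t → ℕ) (q : ℕ)
    (hp : ∀ i, (p i).Prime) (hq : q.Prime)
    (hinj : Function.Injective p) (hpq : ∀ i, p i ≠ q)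
    (hp5 : ∀ i, p i % 8 = 5) (hq7 : q % 8 = 7)
    (hrank : (APmat p).rank = t - 1)
    (hleg : ∀ i, jacobiSym (p i) q = 1) :
    (monsky (Fin.snoc p q)).rank = 2 * t ∧
    LinearMap.ker (monsky (Fin.snoc p q)).mulVecLin =
      Submodule.span (ZMod 2)
        {psiVec (Fin.snoc p q) q 1,
         psiVec (Fin.snoc p q) (∏ i, p i) (∏ i, p i)} :=
  stmt6_general t ht p q hp5 hq7 hrank hleg
end

section
/- Let t be an odd positive integer and let p_1, …, p_t, q be distinct primes with p_i ≡ 5 (mod 8) for all i and q ≡ 7 (mod 8), and suppose the Legendre symbol (q/p_i) = 1 for all i; set P = p_1⋯p_t. If there exist nonzero integers x, y, z, w with gcd(x, y) = 1 satisfying Px² + qy² = z² and Px² − qy² = w², then the quartic residue symbol (q/P)_4 = −1, i.e., the number of indices i ∈ {1,…,t} with q^{(p_i−1)/4} ≡ −1 (mod p_i) is odd. -/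
/-!
Modulo `p_i` the first equation reads `q y² ≡ z²`, so raising it to the power `(p_i - 1) / 4`
gives `(q / p_i)₄ = (z y / p_i)`, and the claim becomes `(z y / P) = -1` for the Jacobi symbol.
Modulo 8 the equations force `z` odd and `y = 2 y'` with `y'` odd. As `P ≡ 5 (mod 8)`,
`(2 / P) = -1`, while reciprocity gives `(y' / P) = (P x² / y') = (z² / y') = 1` and
`(z / P) = (-q y² / z) = (z / q)`. Finally `u = (z + w) / 2` and `v = (z - w) / 2` are coprime,
positive and `u v = 2 q y'²`; if `q ∣ v`, then `u` is a square or twice a square, so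
`(z / q) = (u / q) = 1` because `(2 / q) = 1`.
-/

open Finset

theorem prod_emod_eight_eq_five {ι : Type*} {s : Finset ι} {f : ι → ℕ} (hs : Odd #s)
    (hf : ∀ i ∈ s, f i % 8 = 5) : (∏ i ∈ s, f i) % 8 = 5 := by
  obtain ⟨k, hk⟩ := hs
  rw [prod_nat_mod, prod_congr rfl hf, prod_const, hk, pow_succ, pow_mul, Nat.mul_mod, Nat.pow_mod]
  norm_num

theorem squarefree_prod_of_injective {ι : Type*} [Fintype ι] {p : ι → ℕ}
    (hp : ∀ i, (p i).Prime) (hinj : Function.Injective p) : Squarefree (∏ i, p i) :=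
  squarefree_prod_of_pairwise_isCoprime
    (fun i _ j _ hij => Nat.coprime_iff_isRelPrime.mp <|
      (Nat.coprime_primes (hp i) (hp j)).mpr (hinj.ne hij))
    fun i _ => (hp i).squarefree

theorem jacobiSym_prod_right {ι : Type*} (a : ℤ) (s : Finset ι) (f : ι → ℕ)
    (hf : ∀ i ∈ s, f i ≠ 0) :
    jacobiSym a (∏ i ∈ s, f i) = ∏ i ∈ s, jacobiSym a (f i) := by
  induction s using Finset.cons_induction with
  | empty => simp
  | cons i s _ ih =>
    rw [prod_cons, prod_cons, jacobiSym.mul_right' a (hf i (mem_cons_self i s))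
        (prod_ne_zero_iff.mpr fun j hj => hf j (mem_cons_of_mem hj)),
      ih fun j hj => hf j (mem_cons_of_mem hj)]

theorem odd_card_filter_eq_neg_one {ι : Type*} {s : Finset ι} {f : ι → ℤ}
    (h : ∏ i ∈ s, f i = -1) : Odd #{i ∈ s | f i = -1} := by
  have hf : ∀ i ∈ s, f i = if f i = -1 then -1 else 1 := fun i hi => by
    rcases Int.isUnit_iff.mp (IsUnit.prod_iff.mp (h ▸ isUnit_one.neg) i hi) with h1 | h1 <;>
      simp [h1]
  rw [prod_congr rfl hf, prod_ite, prod_const, prod_const_one, mul_one] at h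
  exact (neg_one_pow_eq_neg_one_iff_odd (by decide)).mp h

theorem pow_div_four_eq_legendreSym {r : ℕ} [Fact r.Prime] (hr : r % 4 = 1) {a : ZMod r}
    {y z : ℤ} (h : a * y ^ 2 = z ^ 2) (hy : (y : ZMod r) ≠ 0) :
    a ^ ((r - 1) / 4) = legendreSym r (z * y) := by
  have hexp : r / 2 = 2 * ((r - 1) / 4) := by omega
  have hsq : ((legendreSym r y : ℤ) : ZMod r) ^ 2 = 1 := by
    exact_mod_cast congrArg (Int.cast : ℤ → ZMod r) (legendreSym.sq_one r hy)
  calc a ^ ((r - 1) / 4) = a ^ ((r - 1) / 4) * (y : ZMod r) ^ (r / 2) * legendreSym r y := by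
        rw [← legendreSym.eq_pow, mul_assoc, ← sq, hsq, mul_one]
    _ = (a * y ^ 2) ^ ((r - 1) / 4) * legendreSym r y := by
        rw [mul_pow, ← pow_mul, ← hexp]
    _ = legendreSym r (z * y) := by
        rw [h, ← pow_mul, ← hexp, ← legendreSym.eq_pow, legendreSym.mul]; push_cast; ring

theorem pow_div_four_eq_neg_one_iff {r : ℕ} [Fact r.Prime] (hr : r % 4 = 1) {a : ZMod r}
    {y z : ℤ} (h : a * y ^ 2 = z ^ 2) (hy : (y : ZMod r) ≠ 0) :
    a ^ ((r - 1) / 4) = -1 ↔ jacobiSym (z * y) r = -1 := by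
  have : Fact (2 < r) := ⟨by have := (Fact.out : r.Prime).two_le; omega⟩
  rw [pow_div_four_eq_legendreSym hr h hy, jacobiSym.legendreSym.to_jacobiSym]
  rcases jacobiSym.trichotomy (z * y) r with h0 | h0 | h0 <;> rw [h0]
  · simp
  · simp [(ZMod.neg_one_ne_one (n := r)).symm]
  · simp

theorem isCoprime_of_mul_sq_add_mul_sq_eq_sq {A B a b c : ℤ} (hA : Squarefree A)
    (hab : IsCoprime a b) (hc : c ≠ 0) (h : A * a ^ 2 + B * b ^ 2 = c ^ 2) : IsCoprime b c := by
  refine isCoprime_of_prime_dvd (fun h0 => hc h0.2) fun r hr hrb hrc => hr.not_isUnit (hA r ?_)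
  have hra : IsCoprime (r * r) (a ^ 2) := by
    rw [← sq]; exact (hab.symm.of_isCoprime_of_dvd_left hrb).pow
  refine hra.dvd_of_dvd_mul_right ?_
  rw [← sq, show A * a ^ 2 = c ^ 2 - B * b ^ 2 by linarith]
  exact dvd_sub (pow_dvd_pow_of_dvd hrc 2) (dvd_mul_of_dvd_right (pow_dvd_pow_of_dvd hrb 2) _)

theorem isCoprime_of_mul_sq_add_and_sub_eq_sq {P q x y z w : ℤ} (hPq : IsCoprime P q) (hz : Odd z)
    (hxz : IsCoprime x z) (hyz : IsCoprime y z)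
    (h₁ : P * x ^ 2 + q * y ^ 2 = z ^ 2) (h₂ : P * x ^ 2 - q * y ^ 2 = w ^ 2) :
    IsCoprime z w := by
  have hz2 : IsCoprime 2 z := Int.isCoprime_two_left.mpr hz
  refine isCoprime_of_prime_dvd (fun h0 => by simp [h0.1] at hz) fun r hr hrz hrw => ?_
  have hr2 : ¬ r ∣ 2 := fun hr2 => hr.not_isUnit (hz2.isUnit_of_dvd' hr2 hrz)
  have hr_dvd : ∀ {A a : ℤ}, IsCoprime a z → r ∣ 2 * (A * a ^ 2) → r ∣ A := fun ha h =>
    (hr.dvd_or_dvd ((hr.dvd_or_dvd h).resolve_left hr2)).resolve_right fun h =>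
      hr.not_isUnit (ha.isUnit_of_dvd' (hr.dvd_of_dvd_pow h) hrz)
  refine hr.not_isUnit (hPq.isUnit_of_dvd' (hr_dvd hxz ?_) (hr_dvd hyz ?_))
  · rw [show 2 * (P * x ^ 2) = z ^ 2 + w ^ 2 by linarith]
    exact dvd_add (dvd_pow hrz two_ne_zero) (dvd_pow hrw two_ne_zero)
  · rw [show 2 * (q * y ^ 2) = z ^ 2 - w ^ 2 by linarith]
    exact dvd_sub (dvd_pow hrz two_ne_zero) (dvd_pow hrw two_ne_zero)

theorem odd_and_eq_two_mul_odd_of_mod_eight {P q x y z w : ℤ} (hP : P % 8 = 5) (hq : q % 8 = 7)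
    (hxy : IsCoprime x y) (h₁ : P * x ^ 2 + q * y ^ 2 = z ^ 2)
    (h₂ : P * x ^ 2 - q * y ^ 2 = w ^ 2) : Odd z ∧ ∃ y', y = 2 * y' ∧ Odd y' := by
  -- `4 * X = 0` means `x` even, `4 * Z = 4` means `z` odd, `2 * Y = 4` means `y ≡ 2 [ZMOD 4]`
  have hmod8 : ∀ X Y Z W : ZMod 8,
      5 * X ^ 2 + 7 * Y ^ 2 = Z ^ 2 → 5 * X ^ 2 - 7 * Y ^ 2 = W ^ 2 →
        (4 * X = 0 ∧ 4 * Y = 0) ∨ (4 * Z = 4 ∧ 2 * Y = 4) := by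
    decide
  have emod : ∀ a b : ℤ, (a : ZMod 8) = b → a % 8 = b % 8 := fun a b =>
    (ZMod.intCast_eq_intCast_iff' a b 8).mp
  have hP' : (P : ZMod 8) = 5 := by
    simpa using (ZMod.intCast_eq_intCast_iff' P 5 8).mpr (by omega)
  have hq' : (q : ZMod 8) = 7 := by
    simpa using (ZMod.intCast_eq_intCast_iff' q 7 8).mpr (by omega)
  rcases hmod8 x y z w (by simpa [hP', hq'] using congrArg (Int.cast : ℤ → ZMod 8) h₁)
    (by simpa [hP', hq'] using congrArg (Int.cast : ℤ → ZMod 8) h₂)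
    with ⟨hx, hy⟩ | ⟨hz, hy⟩
  · have hx := emod (4 * x) 0 (by push_cast; exact hx)
    have hy := emod (4 * y) 0 (by push_cast; exact hy)
    exact (Int.prime_two.not_isUnit (hxy.isUnit_of_dvd' (by omega) (by omega))).elim
  · have hz := emod (4 * z) 4 (by push_cast; exact hz)
    have hy := emod (2 * y) 4 (by push_cast; exact hy)
    exact ⟨Int.odd_iff.mpr (by omega), y / 2, by omega, Int.odd_iff.mpr (by omega)⟩

theorem jacobiSym_eq_jacobiSym_natAbs {a : ℤ} {b : ℕ} (ha : Odd a) (hb : b % 4 = 1) :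
    jacobiSym a b = jacobiSym b a.natAbs := by
  have hn : Odd a.natAbs := Int.natAbs_odd.mpr ha
  obtain ⟨n, rfl | rfl⟩ := Int.eq_nat_or_neg a
  · rw [Int.natAbs_natCast] at hn ⊢
    exact jacobiSym.quadratic_reciprocity_one_mod_four' hn hb
  · rw [Int.natAbs_neg, Int.natAbs_natCast] at hn ⊢
    rw [jacobiSym.neg _ (Nat.odd_iff.mpr (by omega)), ZMod.χ₄_nat_one_mod_four hb, one_mul]
    exact jacobiSym.quadratic_reciprocity_one_mod_four' hn hb

theorem jacobiSym_neg_eq_of_mod_four_eq_three {q n : ℕ} (hq : q % 4 = 3) (hn : Odd n) :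
    jacobiSym (-q) n = jacobiSym n q := by
  rw [jacobiSym.neg _ hn]
  rcases Nat.odd_mod_four_iff.mp (Nat.odd_iff.mp hn) with hn4 | hn4
  · rw [ZMod.χ₄_nat_one_mod_four hn4, one_mul,
      jacobiSym.quadratic_reciprocity_one_mod_four hn4 (Nat.odd_iff.mpr (by omega))]
  · rw [ZMod.χ₄_nat_three_mod_four hn4, jacobiSym.quadratic_reciprocity_three_mod_four hq hn4,
      neg_one_mul, neg_neg]

theorem jacobiSym_eq_jacobiSym_of_modEq {a c x : ℤ} {b : ℕ} (ha : Odd a) (hb : b % 4 = 1)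
    (hxa : IsCoprime x a) (h : b * x ^ 2 ≡ c [ZMOD a]) :
    jacobiSym a b = jacobiSym c a.natAbs := by
  calc jacobiSym a b = jacobiSym b a.natAbs := jacobiSym_eq_jacobiSym_natAbs ha hb
    _ = jacobiSym (b * x ^ 2) a.natAbs := by
        have hg : Int.gcd x a.natAbs = 1 :=
          Int.isCoprime_iff_gcd_eq_one.mp (by rw [Int.natCast_natAbs]; exact hxa.abs_right)
        rw [jacobiSym.mul_left, jacobiSym.sq_one' hg, mul_one]
    _ = jacobiSym c a.natAbs :=
        jacobiSym.mod_left' (by rwa [Int.natCast_natAbs, Int.emod_abs, Int.emod_abs])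

theorem exists_eq_sq_or_eq_two_mul_sq {u w m : ℤ} (hu : 0 < u) (huw : IsCoprime u w)
    (h : u * w = 2 * m ^ 2) : ∃ a, u = a ^ 2 ∨ u = 2 * a ^ 2 := by
  rcases Int.even_or_odd u with ⟨u₁, rfl⟩ | hodd
  · obtain ⟨a, ha | ha⟩ := Int.sq_of_isCoprime
      (huw.of_isCoprime_of_dvd_left (Dvd.intro_left 2 (two_mul u₁)))
      (show u₁ * w = m ^ 2 by linarith)
    · exact ⟨a, Or.inr (by rw [ha]; ring)⟩
    · nlinarith [sq_nonneg a]
  · obtain ⟨w₁, rfl⟩ : (2 : ℤ) ∣ w :=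
      (Int.prime_two.dvd_or_dvd (Dvd.intro _ h.symm)).resolve_left
        fun h2 => Int.not_even_iff_odd.mpr hodd (even_iff_two_dvd.mpr h2)
    obtain ⟨a, ha | ha⟩ := Int.sq_of_isCoprime
      (huw.of_isCoprime_of_dvd_right (dvd_mul_left w₁ 2)) (show u * w₁ = m ^ 2 by linarith)
    · exact ⟨a, Or.inl ha⟩
    · nlinarith [sq_nonneg a]

theorem jacobiSym_add_eq_one_of_mul_eq {q : ℕ} (hq : q.Prime) (h2 : jacobiSym 2 q = 1)
    {u v m : ℤ} (hu : 0 < u) (huv : IsCoprime u v) (h : u * v = 2 * q * m ^ 2)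
    (hqv : (q : ℤ) ∣ v) : jacobiSym (u + v) q = 1 := by
  obtain ⟨k, rfl⟩ := hqv
  have hq' : Prime (q : ℤ) := Nat.prime_iff_prime_int.mp hq
  have hqu : ¬ (q : ℤ) ∣ u := fun hqu =>
    hq'.not_isUnit (huv.isUnit_of_dvd' hqu (dvd_mul_right _ _))
  obtain ⟨a, ha⟩ := exists_eq_sq_or_eq_two_mul_sq (m := m) hu
    (huv.of_isCoprime_of_dvd_right (dvd_mul_left k _))
    (mul_left_cancel₀ (Int.natCast_ne_zero.mpr hq.ne_zero) (by linear_combination h))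
  have ha2 : a ^ 2 ∣ u := by rcases ha with rfl | rfl <;> simp
  have hqa : Int.gcd a q = 1 := Int.isCoprime_iff_gcd_eq_one.mp <| IsCoprime.symm <|
    hq'.irreducible.coprime_iff_not_dvd.mpr fun hqa => hqu ((dvd_pow hqa two_ne_zero).trans ha2)
  rw [jacobiSym.mod_left' (Int.add_mul_emod_self_left _ _ _)]
  rcases ha with rfl | rfl
  · exact jacobiSym.sq_one' hqa
  · rw [jacobiSym.mul_left, jacobiSym.sq_one' hqa, mul_one, h2]

theorem jacobiSym_eq_one_of_sq_sub_sq {q : ℕ} (hq : q.Prime) (h2 : jacobiSym 2 q = 1)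
    {z w m : ℤ} (hz : 0 < z) (hm : m ≠ 0) (hzw : IsCoprime z w)
    (h : z ^ 2 - w ^ 2 = 8 * q * m ^ 2) : jacobiSym z q = 1 := by
  have heven : Even (z + w) ∧ Even (z - w) := by
    have : Even ((z + w) * (z - w)) := ⟨4 * q * m ^ 2, by linear_combination h⟩
    rw [Int.even_mul] at this
    rw [Int.even_add, Int.even_sub] at this ⊢
    tauto
  obtain ⟨⟨u, hu⟩, ⟨v, hv⟩⟩ := heven
  obtain rfl : z = u + v := by linarith
  obtain rfl : w = u - v := by linarith
  have huv : u * v = 2 * q * m ^ 2 := by linarith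
  have hcop : IsCoprime u v := by
    obtain ⟨a, b, hab⟩ := hzw
    exact ⟨a + b, a - b, by linear_combination hab⟩
  have hpos : 0 < u * v := by rw [huv]; have := hq.pos; positivity
  have hu : 0 < u := by nlinarith
  have hv : 0 < v := by nlinarith
  have hquv : (q : ℤ) ∣ u * v := ⟨2 * m ^ 2, by rw [huv]; ring⟩
  rcases (Nat.prime_iff_prime_int.mp hq).dvd_or_dvd hquv with hqu | hqv
  · rw [add_comm]
    exact jacobiSym_add_eq_one_of_mul_eq hq h2 hv hcop.symm (by linarith) hqu
  · exact jacobiSym_add_eq_one_of_mul_eq hq h2 hu hcop huv hqv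

theorem jacobiSym_eq_jacobiSym_of_mul_sq_add_mul_sq_eq_sq {P q : ℕ} {x y z : ℤ}
    (hP : P % 4 = 1) (hq : q % 4 = 3) (hz : 0 ≤ z) (hzodd : Odd z) (hxz : IsCoprime x z)
    (hyz : IsCoprime y z) (h : P * x ^ 2 + q * y ^ 2 = z ^ 2) :
    jacobiSym z P = jacobiSym z q := by
  lift z to ℕ using hz
  have hg : Int.gcd y z = 1 := Int.isCoprime_iff_gcd_eq_one.mp hyz
  rw [jacobiSym_eq_jacobiSym_of_modEq hzodd hP hxz (c := -q * y ^ 2)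
      (Int.modEq_iff_dvd.mpr ⟨-z, by linear_combination -h⟩),
    Int.natAbs_natCast, jacobiSym.mul_left, jacobiSym.sq_one' hg, mul_one,
    jacobiSym_neg_eq_of_mod_four_eq_three hq (Int.odd_coe_nat _ |>.mp hzodd)]

theorem jacobiSym_mul_eq_neg_one_of_mul_sq_add_and_sub_eq_sq {P q : ℕ} {x y z w : ℤ}
    (hP8 : P % 8 = 5) (hP : Squarefree P) (hq : q.Prime) (hq8 : q % 8 = 7) (hqP : ¬ q ∣ P)
    (hxy : IsCoprime x y) (hz : 0 ≤ z)
    (h₁ : P * x ^ 2 + q * y ^ 2 = z ^ 2) (h₂ : P * x ^ 2 - q * y ^ 2 = w ^ 2) :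
    jacobiSym (z * y) P = -1 := by
  obtain ⟨hzodd, y, rfl, hyodd⟩ :=
    odd_and_eq_two_mul_odd_of_mod_eight (by omega) (by omega) hxy h₁ h₂
  have hz0 : z ≠ 0 := by rintro rfl; simp at hzodd
  have hxz : IsCoprime x z := isCoprime_of_mul_sq_add_mul_sq_eq_sq (A := q) (B := P)
    (Nat.prime_iff_prime_int.mp hq).squarefree hxy.symm hz0 (by linear_combination h₁)
  have hyz : IsCoprime (2 * y) z :=
    isCoprime_of_mul_sq_add_mul_sq_eq_sq (Int.squarefree_natCast.mpr hP) hxy hz0 h₁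
  have hPq : IsCoprime (P : ℤ) q := IsCoprime.symm <|
    (Nat.prime_iff_prime_int.mp hq).irreducible.coprime_iff_not_dvd.mpr
      (Int.natCast_dvd_natCast.not.mpr hqP)
  have hzw : IsCoprime z w := isCoprime_of_mul_sq_add_and_sub_eq_sq hPq hzodd hxz hyz h₁ h₂
  have h2q : jacobiSym 2 q = 1 := by
    rw [jacobiSym.at_two (hq.odd_of_ne_two (by omega)), ZMod.χ₈_nat_eq_if_mod_eight]
    simp [hq8, show q % 2 = 1 by omega]
  have hJz : jacobiSym z P = 1 := by
    rw [jacobiSym_eq_jacobiSym_of_mul_sq_add_mul_sq_eq_sq (by omega) (by omega) hz hzodd hxz hyz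
      h₁]
    exact jacobiSym_eq_one_of_sq_sub_sq (m := y) hq h2q (hz.lt_of_ne hz0.symm)
      (by rintro rfl; simp at hyodd) hzw (by linear_combination h₂ - h₁)
  have hJy : jacobiSym y P = 1 := by
    have hg : Int.gcd z y.natAbs = 1 := Int.isCoprime_iff_gcd_eq_one.mp <| by
      rw [Int.natCast_natAbs]
      exact (hyz.symm.of_isCoprime_of_dvd_right (dvd_mul_left y 2)).abs_right
    rw [jacobiSym_eq_jacobiSym_of_modEq hyodd (by omega)
        (hxy.of_isCoprime_of_dvd_right (dvd_mul_left y 2)) (c := z ^ 2)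
        (Int.modEq_iff_dvd.mpr ⟨4 * q * y, by linear_combination -h₁⟩),
      jacobiSym.sq_one' hg]
  have hJ2 : jacobiSym 2 P = -1 := by
    rw [jacobiSym.at_two (Nat.odd_iff.mpr (by omega)), ZMod.χ₈_nat_eq_if_mod_eight]
    simp [hP8, show P % 2 = 1 by omega]
  rw [jacobiSym.mul_left, jacobiSym.mul_left, hJz, hJy, hJ2]; norm_num

theorem odd_card_pow_div_four_eq_neg_one {ι : Type*} [Fintype ι] {p : ι → ℕ}
    (hp : ∀ i, (p i).Prime) (hp4 : ∀ i, p i % 4 = 1) {q : ℕ} {x y z : ℤ}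
    (h : ((∏ i, p i : ℕ) : ℤ) * x ^ 2 + q * y ^ 2 = z ^ 2)
    (hJ : jacobiSym (z * y) (∏ i, p i) = -1) :
    Odd #{i | (q : ZMod (p i)) ^ ((p i - 1) / 4) = -1} := by
  rw [jacobiSym_prod_right _ _ _ fun i _ => (hp i).ne_zero] at hJ
  have hy : ∀ i, (y : ZMod (p i)) ≠ 0 := fun i hy0 => by
    have := Fact.mk (hp i)
    have h0 : jacobiSym (z * y) (p i) = 0 := by
      rw [← jacobiSym.legendreSym.to_jacobiSym, legendreSym.eq_zero_iff]
      push_cast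
      rw [hy0, mul_zero]
    rw [prod_eq_zero (mem_univ i) h0] at hJ
    norm_num at hJ
  have hiff : ∀ i ∈ univ, (q : ZMod (p i)) ^ ((p i - 1) / 4) = -1 ↔
      jacobiSym (z * y) (p i) = -1 := fun i _ => by
    have := Fact.mk (hp i)
    refine pow_div_four_eq_neg_one_iff (hp4 i) ?_ (hy i)
    have := congrArg (Int.cast : ℤ → ZMod (p i)) h
    push_cast at this
    rwa [prod_eq_zero (mem_univ i) (ZMod.natCast_self _), zero_mul, zero_add] at this
  rw [filter_congr hiff]
  exact odd_card_filter_eq_neg_one hJ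

theorem stmt12_general (t : ℕ) (ht : Odd t)
    (p : Fin t → ℕ) (q : ℕ)
    (hp : ∀ i, (p i).Prime) (hq : q.Prime)
    (hinj : Function.Injective p) (hpq : ∀ i, p i ≠ q)
    (hp5 : ∀ i, p i % 8 = 5) (hq7 : q % 8 = 7)
    (x y z w : ℤ)
    (hgcd : Int.gcd x y = 1)
    (heq1 : (∏ i, (p i : ℤ)) * x ^ 2 + (q : ℤ) * y ^ 2 = z ^ 2)
    (heq2 : (∏ i, (p i : ℤ)) * x ^ 2 - (q : ℤ) * y ^ 2 = w ^ 2) :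
    Odd (univ.filter fun i => (q : ZMod (p i)) ^ ((p i - 1) / 4) = -1).card := by
  have hqP : ¬ q ∣ ∏ i, p i := fun h => by
    obtain ⟨i, -, hi⟩ := (Prime.dvd_finsetProd_iff hq.prime _).mp h
    exact hpq i ((Nat.prime_dvd_prime_iff_eq hq (hp i)).mp hi).symm
  -- only `z ^ 2` occurs in the hypotheses, so we may take `z ≥ 0`
  rw [← sq_abs z, ← Nat.cast_prod] at heq1
  rw [← Nat.cast_prod] at heq2
  refine odd_card_pow_div_four_eq_neg_one hp (fun i => by have := hp5 i; omega) heq1 ?_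
  exact jacobiSym_mul_eq_neg_one_of_mul_sq_add_and_sub_eq_sq
    (prod_emod_eight_eq_five (by simpa using ht) fun i _ => hp5 i)
    (squarefree_prod_of_injective hp hinj) hq hq7 hqP (Int.isCoprime_iff_gcd_eq_one.mpr hgcd)
    (abs_nonneg z) heq1 heq2

/-- Let `t` be odd and `p_1, …, p_t, q` distinct primes with `p_i ≡ 5 (mod 8)`,
`q ≡ 7 (mod 8)` and Legendre symbol `(q / p_i) = 1` for all `i`; set `P = p_1 ⋯ p_t`.
If there are nonzero integers `x, y, z, w` with `gcd(x, y) = 1` satisfying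
`P x² + q y² = z²` and `P x² − q y² = w²`, then the quartic residue symbol
`(q / P)₄ = -1`, i.e. the number of indices `i` with
`q^((p_i - 1)/4) ≡ -1 (mod p_i)` is odd. -/
theorem stmt12 (t : ℕ) (ht : Odd t)
    (p : Fin t → ℕ) (q : ℕ)
    (hp : ∀ i, (p i).Prime) (hq : q.Prime)
    (hinj : Function.Injective p) (hpq : ∀ i, p i ≠ q)
    (hp5 : ∀ i, p i % 8 = 5) (hq7 : q % 8 = 7)
    (hleg : ∀ i, jacobiSym q (p i) = 1)
    (x y z w : ℤ) (hx : x ≠ 0) (hy : y ≠ 0) (hz : z ≠ 0) (hw : w ≠ 0)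
    (hgcd : Int.gcd x y = 1)
    (heq1 : (∏ i, (p i : ℤ)) * x ^ 2 + (q : ℤ) * y ^ 2 = z ^ 2)
    (heq2 : (∏ i, (p i : ℤ)) * x ^ 2 - (q : ℤ) * y ^ 2 = w ^ 2) :
    Odd (univ.filter fun i => (q : ZMod (p i)) ^ ((p i - 1) / 4) = -1).card :=
  stmt12_general t ht p q hp hq hinj hpq hp5 hq7 x y z w hgcd heq1 heq2
end

section
/- For every positive integer n, there exist positive rational numbers a, b, c with a² + b² = c² and ab = 2n if and only if there exist rational numbers x, y with y ≠ 0 and y² = x³ − n²x. -/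
/-- `n` is a congruent number: it is the area of a right triangle with rational sides. -/
def IsCongruentNum (n : ℕ) : Prop :=
  ∃ a b c : ℚ, 0 < a ∧ 0 < b ∧ 0 < c ∧ a ^ 2 + b ^ 2 = c ^ 2 ∧ a * b = 2 * n

/-!
Rational right triangles of area `n` and points of `y² = x³ − n² x` with `y ≠ 0` correspond
via `(a, b, c) ↦ (n (a + c) / b, 2 n² (a + c) / b²)`, with inverse
`(x, y) ↦ ((x² − n²) / y, 2 n x / y, (x² + n²) / y)`. The inverse may produce negative sides,
but since their product `2 n` is positive, taking absolute values gives a genuine triangle.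
-/

section Field

variable {K : Type*} [Field K]

theorem sq_eq_cube_sub_mul_of_right_triangle {a b c n : K} (hb : b ≠ 0)
    (hpyth : a ^ 2 + b ^ 2 = c ^ 2) (harea : a * b = 2 * n) :
    (2 * n ^ 2 * (a + c) / b ^ 2) ^ 2 =
      (n * (a + c) / b) ^ 3 - n ^ 2 * (n * (a + c) / b) := by
  field_simp
  linear_combination n ^ 3 * (a + c) * b * hpyth - 2 * n ^ 3 * (a + c) ^ 2 * harea

theorem right_triangle_of_sq_eq_cube_sub_mul {x y n : K} (hy : y ≠ 0)
    (hcurve : y ^ 2 = x ^ 3 - n ^ 2 * x) :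
    ((x ^ 2 - n ^ 2) / y) ^ 2 + (2 * n * x / y) ^ 2 = ((x ^ 2 + n ^ 2) / y) ^ 2 ∧
      (x ^ 2 - n ^ 2) / y * (2 * n * x / y) = 2 * n := by
  constructor
  · field_simp
    ring
  · field_simp
    linear_combination -2 * n * hcurve

end Field

theorem IsCongruentNum.of_sq_add_sq {n : ℕ} (hn : 0 < n) {a b c : ℚ}
    (hpyth : a ^ 2 + b ^ 2 = c ^ 2) (harea : a * b = 2 * n) : IsCongruentNum n := by
  have hab : 0 < a * b := by rw [harea]; positivity
  have ha : a ≠ 0 := left_ne_zero_of_mul hab.ne'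
  have hb : b ≠ 0 := right_ne_zero_of_mul hab.ne'
  have hc : c ≠ 0 := by
    rintro rfl
    nlinarith [sq_pos_of_ne_zero ha, sq_pos_of_ne_zero hb]
  refine ⟨|a|, |b|, |c|, abs_pos.2 ha, abs_pos.2 hb, abs_pos.2 hc, ?_, ?_⟩
  · simpa only [sq_abs] using hpyth
  · rw [← abs_mul, abs_of_pos hab, harea]

/-- A positive integer `n` is a congruent number iff the curve `y² = x³ − n² x` has a
rational point with `y ≠ 0`. -/
theorem stmt16 (n : ℕ) (hn : 0 < n) :
    IsCongruentNum n ↔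
      ∃ x y : ℚ, y ≠ 0 ∧ y ^ 2 = x ^ 3 - (n : ℚ) ^ 2 * x := by
  constructor
  · rintro ⟨a, b, c, ha, hb, hc, hpyth, harea⟩
    exact ⟨n * (a + c) / b, 2 * n ^ 2 * (a + c) / b ^ 2, by positivity,
      sq_eq_cube_sub_mul_of_right_triangle hb.ne' hpyth harea⟩
  · rintro ⟨x, y, hy, hcurve⟩
    obtain ⟨hpyth, harea⟩ := right_triangle_of_sq_eq_cube_sub_mul hy hcurve
    exact IsCongruentNum.of_sq_add_sq hn hpyth harea
end
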